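/- Let Q = G ⋉ U be a semidirect product of a group G acting on an abelian group U, let ψ : U → k^× be a group homomorphism, let P ≤ G be the stabilizer of ψ under the action (g·ψ)(u) = ψ(g⁻¹·u), and let σ be a k-linear representation of P. Then the map given by restriction of functions from Q to G is a G-equivariant isomorphism from Ind_{PU}^{Q}(σ ⊗ ψ) onto Ind_P^G(σ), with inverse given by f ↦ f_ψ where f_ψ(g·u) = ψ^g(u) f(g). -/
import Mathlib


open SemidirectProduct

variable {k G U V : Type*}

/-- The induced representation `Ind_{PU}^{Q}(σ ⊗ ψ)`: functions `f : Q → V` with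
`f((u,p)·q) = ψ(u)·σ(p)(f q)` for `p ∈ P`, `u ∈ U`. -/
def IndPUQ [Field k] [Group G] [CommGroup U] (φ : G →* MulAut U) (ψ : U →* kˣ)
    (P : Subgroup G) [AddCommGroup V] [Module k V] (σ : Representation k P V)
    (f : U ⋊[φ] G → V) : Prop :=
  ∀ (p : G) (hp : p ∈ P) (u : U) (q : U ⋊[φ] G),
    f ((⟨u, p⟩ : U ⋊[φ] G) * q) = (ψ u : k) • (σ ⟨p, hp⟩) (f q)

/-- The induced representation `Ind_P^G(σ)`: functions `f : G → V` with
`f(p·g) = σ(p)(f g)` for `p ∈ P`. -/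
def IndPG [Field k] [Group G] (P : Subgroup G) [AddCommGroup V] [Module k V]
    (σ : Representation k P V) (f : G → V) : Prop :=
  ∀ (p : G) (hp : p ∈ P) (g : G), f (p * g) = (σ ⟨p, hp⟩) (f g)

/-- Restriction of functions from `Q = G ⋉ U` to `G` is a `G`-equivariant isomorphism
`Ind_{PU}^{Q}(σ ⊗ ψ) ≅ Ind_P^G(σ)`, where `P` is the stabilizer of the character `ψ`,
with inverse `f ↦ f_ψ` given by `f_ψ(g·u) = ψ^g(u)·f(g)`. -/
theorem restriction_iso_of_induced [Field k] [Group G] [CommGroup U]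
    (φ : G →* MulAut U) (ψ : U →* kˣ) (P : Subgroup G)
    (hP : ∀ g : G, g ∈ P ↔ ∀ u : U, ψ (φ g u) = ψ u)
    [AddCommGroup V] [Module k V] (σ : Representation k P V) :
    ∃ e : {f : U ⋊[φ] G → V // IndPUQ φ ψ P σ f} ≃ {f : G → V // IndPG P σ f},
      (∀ f g, ((e f : {f : G → V // IndPG P σ f}) : G → V) g = (f : U ⋊[φ] G → V) (inr g)) ∧
      (∀ (f : {f : G → V // IndPG P σ f}) (g : G) (u : U),
        ((e.symm f : {f : U ⋊[φ] G → V // IndPUQ φ ψ P σ f}) : U ⋊[φ] G → V)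
            (inr g * inl u) = (ψ (φ g u) : k) • (f : G → V) g) ∧
      (∀ (f₁ f₂ : {f : U ⋊[φ] G → V // IndPUQ φ ψ P σ f}) (g' : G),
        (∀ q : U ⋊[φ] G, (f₂ : U ⋊[φ] G → V) q = (f₁ : U ⋊[φ] G → V) (q * inr g')) →
        ∀ g : G, ((e f₂ : {f : G → V // IndPG P σ f}) : G → V) g =
          ((e f₁ : {f : G → V // IndPG P σ f}) : G → V) (g * g')) := by
  have hfwd : ∀ f : {f : U ⋊[φ] G → V // IndPUQ φ ψ P σ f},
      IndPG P σ (fun g => (f : U ⋊[φ] G → V) (inr g)) := by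
    rintro ⟨f, hf⟩ p hp g
    have : (inr (p * g) : U ⋊[φ] G) = (⟨1, p⟩ : U ⋊[φ] G) * inr g := by
      ext <;> simp
    simp only [this, hf p hp 1 (inr g), map_one, Units.val_one, one_smul]
  have hbwd : ∀ f : {f : G → V // IndPG P σ f},
      IndPUQ φ ψ P σ (fun q : U ⋊[φ] G => (ψ q.left : k) • (f : G → V) q.right) := by
    rintro ⟨f, hf⟩ p hp u q
    simp only [mul_left, mul_right, map_mul, Units.val_mul, hf p hp q.right,
      (hP p).1 hp q.left, mul_smul, map_smul]
  refine ⟨{ toFun := fun f => ⟨fun g => (f : U ⋊[φ] G → V) (inr g), hfwd f⟩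
            invFun := fun f => ⟨fun q => (ψ q.left : k) • (f : G → V) q.right, hbwd f⟩
            left_inv := ?_
            right_inv := ?_ }, ?_, ?_, ?_⟩
  · rintro ⟨f, hf⟩
    ext q
    show (ψ q.left : k) • f (inr q.right) = f q
    have hq : q = (⟨q.left, 1⟩ : U ⋊[φ] G) * inr q.right := by ext <;> simp
    conv_rhs => rw [hq]
    rw [hf 1 P.one_mem q.left (inr q.right),
      show (⟨1, P.one_mem⟩ : P) = 1 from rfl, map_one, Module.End.one_apply]
  · rintro ⟨f, hf⟩
    ext g
    simp
  · intro f g; rfl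
  · rintro ⟨f, hf⟩ g u
    show (ψ (inr g * inl u : U ⋊[φ] G).left : k) • f (inr g * inl u : U ⋊[φ] G).right = _
    have h1 : (inr g * inl u : U ⋊[φ] G).left = φ g u := by simp
    have h2 : (inr g * inl u : U ⋊[φ] G).right = g := by simp
    rw [h1, h2]
  · rintro ⟨f₁, hf₁⟩ ⟨f₂, hf₂⟩ g' h g
    have hgg : (inr g * inr g' : U ⋊[φ] G) = inr (g * g') := by ext <;> simp
    show f₂ (inr g) = f₁ (inr (g * g'))
    rw [← hgg]
    exact h (inr g)
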